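/- (Euclidean linear programming bound, lattice case) Let f : (0,∞) → [0,∞), and suppose h : ℝⁿ → ℝ satisfies h(x) ≤ f(|x|²) for all x ≠ 0 and h is the Fourier transform of a nonnegative continuous function g ∈ L¹(ℝⁿ). Then for any full-rank lattice Λ ⊂ ℝⁿ with covolume 1/δ, the energy ∑_{x∈Λ, x≠0} f(|x|²) is at least δ·(liminf_{t→0} g(t)) − h(0). -/

import Mathlib

/-!
Poisson summation is avoided. Let `b` be a basis of `Λ` and `P_N = {∑ aᵢ bᵢ : 0 ≤ aᵢ < N}`.
Since `h = ĝ` with `g ≥ 0`, `∑_{x, y ∈ P_N} h(x - y) = ∫ |∑_{x ∈ P_N} e(⟪v, x⟫)|² g(v) dv`.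
For fixed `y` the differences `x - y`, `x ≠ y`, are distinct nonzero lattice vectors, so
`h ≤ f(|·|²)` bounds the left side by `N^n (h(0) + E)`, `E` the energy. On the right the
exponential sum is a product of one-dimensional Fejér kernels in the coordinates `⟪bᵢ, v⟫`,
which carry mass `≈ N` near `0`, where `g ≈ g(0)`; passing to these coordinates costs the
Jacobian `1 / covol = δ`. So the right side is `≥ (δ g(0) - o(1)) N^n`; let `N → ∞`.
-/

open Classical MeasureTheory Filter Finset Real
open scoped FourierTransform RealInnerProductSpace ENNReal Topology

noncomputable def expSum (N : ℕ) (θ : ℝ) : ℂ := ∑ k ∈ range N, (𝐞 (k * θ) : ℂ)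

/-- `N` times the Fejér kernel of order `N`. -/
noncomputable def fejerKernel (N : ℕ) (θ : ℝ) : ℝ := Complex.normSq (expSum N θ)

@[fun_prop]
theorem continuous_expSum (N : ℕ) : Continuous (expSum N) :=
  continuous_finsetSum _ fun _ _ ↦ by fun_prop

@[fun_prop]
theorem continuous_fejerKernel (N : ℕ) : Continuous (fejerKernel N) :=
  Complex.continuous_normSq.comp (continuous_expSum N)

theorem fejerKernel_nonneg (N : ℕ) (θ : ℝ) : 0 ≤ fejerKernel N θ := Complex.normSq_nonneg _

theorem expSum_mul_fourierChar_sub_one (N : ℕ) (θ : ℝ) :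
    expSum N θ * ((𝐞 θ : ℂ) - 1) = 𝐞 (N * θ) - 1 := by
  have hpow (k : ℕ) : (𝐞 (k * θ) : ℂ) = (𝐞 θ : ℂ) ^ k := by
    rw [← nsmul_eq_mul, AddChar.map_nsmul_eq_pow, Circle.coe_pow]
  simp only [expSum, hpow, geom_sum_mul]

theorem norm_fourierChar_sub_one (θ : ℝ) : ‖(𝐞 θ : ℂ) - 1‖ = |2 * Real.sin (π * θ)| := by
  rw [fourierChar_apply, mul_comm, Complex.norm_exp_I_mul_ofReal_sub_one, Real.norm_eq_abs]
  ring_nf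

theorem four_mul_abs_le_norm_fourierChar_sub_one {θ : ℝ} (hθ : |θ| ≤ 1 / 2) :
    4 * |θ| ≤ ‖(𝐞 θ : ℂ) - 1‖ := by
  have hθ0 : 0 ≤ π * |θ| := mul_nonneg Real.pi_pos.le (abs_nonneg θ)
  have hθπ : π * |θ| ≤ π / 2 := by nlinarith [Real.pi_pos]
  have hjordan : 2 / π * (π * |θ|) ≤ Real.sin (π * |θ|) :=
    Real.mul_le_sin hθ0 hθπ
  have hsin : |Real.sin (π * θ)| = Real.sin (π * |θ|) := by
    have hnn : 0 ≤ Real.sin (π * |θ|) :=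
      Real.sin_nonneg_of_nonneg_of_le_pi hθ0 (by linarith [Real.pi_pos])
    rcases abs_choice θ with h | h <;> rw [h] at hnn ⊢
    · exact abs_of_nonneg hnn
    · rw [mul_neg, Real.sin_neg] at hnn ⊢
      exact abs_of_nonpos (by linarith)
  rw [norm_fourierChar_sub_one, abs_mul, abs_two, hsin]
  field_simp at hjordan
  linarith

theorem fejerKernel_le {N : ℕ} {r θ : ℝ} (hr : 0 < r) (hrθ : r ≤ |θ|) (hθ : |θ| ≤ 1 / 2) :
    fejerKernel N θ ≤ 1 / (4 * r ^ 2) := by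
  have hden : 4 * r ≤ ‖(𝐞 θ : ℂ) - 1‖ := by
    linarith [four_mul_abs_le_norm_fourierChar_sub_one hθ]
  have hnum : ‖(𝐞 (N * θ) : ℂ) - 1‖ ≤ 2 := by
    rw [norm_fourierChar_sub_one, abs_mul, abs_two]
    linarith [Real.abs_sin_le_one (π * (N * θ))]
  have hS : ‖expSum N θ‖ * (4 * r) ≤ 2 := by
    calc ‖expSum N θ‖ * (4 * r) ≤ ‖expSum N θ‖ * ‖(𝐞 θ : ℂ) - 1‖ := by gcongr
      _ = ‖(𝐞 (N * θ) : ℂ) - 1‖ := by rw [← norm_mul, expSum_mul_fourierChar_sub_one]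
      _ ≤ 2 := hnum
  rw [fejerKernel, Complex.normSq_eq_norm_sq, le_div_iff₀ (by positivity)]
  calc ‖expSum N θ‖ ^ 2 * (4 * r ^ 2) = (‖expSum N θ‖ * (2 * r)) ^ 2 := by ring
    _ ≤ 1 := pow_le_one₀ (by positivity) (by linarith)

theorem fejerKernel_le_sq (N : ℕ) (θ : ℝ) : fejerKernel N θ ≤ N ^ 2 := by
  have hS : ‖expSum N θ‖ ≤ N :=
    (norm_sum_le _ _).trans (by simp [Circle.norm_coe])
  rw [fejerKernel, Complex.normSq_eq_norm_sq]
  gcongr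

theorem re_fourierChar (x : ℝ) : (𝐞 x : ℂ).re = Real.cos (2 * π * x) := by
  rw [fourierChar_apply, Complex.exp_ofReal_mul_I_re]

theorem fourierChar_sum {α : Type*} (s : Finset α) (f : α → ℝ) :
    (𝐞 (∑ a ∈ s, f a) : ℂ) = ∏ a ∈ s, (𝐞 (f a) : ℂ) := by
  induction s using Finset.cons_induction with
  | empty => simp
  | cons a s ha ih => rw [sum_cons, prod_cons, AddChar.map_add_eq_mul, Circle.coe_mul, ih]

theorem fejerKernel_eq_sum_cos (N : ℕ) (θ : ℝ) :
    fejerKernel N θ = ∑ k ∈ range N, ∑ l ∈ range N, Real.cos (2 * π * ((k - l : ℤ) * θ)) := by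
  have hprod : expSum N θ * (starRingEnd ℂ) (expSum N θ) =
      ∑ k ∈ range N, ∑ l ∈ range N, (𝐞 ((k - l : ℤ) * θ) : ℂ) := by
    simp only [expSum, map_sum, sum_mul_sum, ← Circle.coe_inv_eq_conj, ← AddChar.map_neg_eq_inv,
      ← Circle.coe_mul, ← AddChar.map_add_eq_mul]
    congr! 3 with k - l -
    push_cast
    rw [sub_mul, sub_eq_add_neg]
  rw [fejerKernel, ← Complex.ofReal_re (Complex.normSq _), ← Complex.mul_conj, hprod]
  simp only [Complex.re_sum, re_fourierChar]

theorem integral_cos_two_pi_int_mul (m : ℤ) :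
    ∫ θ in (-(1 / 2) : ℝ)..(1 / 2), Real.cos (2 * π * (m * θ)) = if m = 0 then 1 else 0 := by
  split_ifs with hm
  · norm_num [hm]
  · have hc : 2 * π * m ≠ 0 := by simp [Real.pi_ne_zero, hm]
    simp_rw [← mul_assoc]
    rw [intervalIntegral.integral_comp_mul_left (fun x ↦ Real.cos x) hc, integral_cos,
      show 2 * π * m * (1 / 2) = m * π by ring, show 2 * π * m * (-(1 / 2)) = -(m * π) by ring,
      Real.sin_neg, Real.sin_int_mul_pi]
    simp

theorem integral_fejerKernel (N : ℕ) : ∫ θ in (-(1 / 2) : ℝ)..(1 / 2), fejerKernel N θ = N := by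
  simp_rw [fejerKernel_eq_sum_cos]
  rw [intervalIntegral.integral_finsetSum fun _ _ ↦
    (continuous_finsetSum _ fun _ _ ↦ by fun_prop).intervalIntegrable _ _]
  have hrow (k : ℕ) : ∫ θ in (-(1 / 2) : ℝ)..(1 / 2),
      ∑ l ∈ range N, Real.cos (2 * π * ((k - l : ℤ) * θ)) = if k ∈ range N then 1 else 0 := by
    rw [intervalIntegral.integral_finsetSum fun _ _ ↦
      (by fun_prop : Continuous _).intervalIntegrable _ _]
    simp_rw [integral_cos_two_pi_int_mul, sub_eq_zero, Nat.cast_inj]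
    exact sum_ite_eq _ _ _
  simp_rw [hrow, sum_ite_mem, inter_self, sum_const, card_range, nsmul_one]

theorem integral_Icc_fejerKernel_ge {N : ℕ} {r : ℝ} (hr : 0 < r) (hr' : r ≤ 1 / 2) :
    N - 1 / (2 * r ^ 2) ≤ ∫ θ in Set.Icc (-r) r, fejerKernel N θ := by
  have hint (a b : ℝ) : IntervalIntegrable (fejerKernel N) volume a b :=
    (continuous_fejerKernel N).intervalIntegrable a b
  have hleft : ∫ θ in (-(1 / 2) : ℝ)..(-r), fejerKernel N θ ≤ 1 / (4 * r ^ 2) := by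
    refine (intervalIntegral.integral_mono_on (by linarith) (hint _ _) intervalIntegrable_const
      fun θ hθ ↦ fejerKernel_le hr ?_ ?_).trans ?_
    · rw [abs_of_neg (by linarith [hθ.2])]; linarith [hθ.2]
    · rw [abs_of_neg (by linarith [hθ.2])]; linarith [hθ.1]
    · rw [intervalIntegral.integral_const, smul_eq_mul]
      exact mul_le_of_le_one_left (by positivity) (by linarith)
  have hright : ∫ θ in r..(1 / 2), fejerKernel N θ ≤ 1 / (4 * r ^ 2) := by
    refine (intervalIntegral.integral_mono_on hr' (hint _ _) intervalIntegrable_const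
      fun θ hθ ↦ fejerKernel_le hr ?_ ?_).trans ?_
    · rw [abs_of_pos (by linarith [hθ.1])]; exact hθ.1
    · rw [abs_of_pos (by linarith [hθ.1])]; exact hθ.2
    · rw [intervalIntegral.integral_const, smul_eq_mul]
      exact mul_le_of_le_one_left (by positivity) (by linarith)
  have hsplit : (∫ θ in (-(1 / 2) : ℝ)..(-r), fejerKernel N θ) + (∫ θ in (-r)..r, fejerKernel N θ)
      + (∫ θ in r..(1 / 2), fejerKernel N θ) = N := by
    rw [intervalIntegral.integral_add_adjacent_intervals (hint _ _) (hint _ _),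
      intervalIntegral.integral_add_adjacent_intervals (hint _ _) (hint _ _), integral_fejerKernel]
  rw [integral_Icc_eq_integral_Ioc, ← intervalIntegral.integral_of_le (by linarith)]
  have : 1 / (4 * r ^ 2) + 1 / (4 * r ^ 2) = 1 / (2 * r ^ 2) := by field_simp; ring
  linarith

section PositiveDefinite

variable {V : Type*} [NormedAddCommGroup V] [InnerProductSpace ℝ V] [FiniteDimensional ℝ V]
  [MeasurableSpace V] [BorelSpace V]

theorem ofReal_eq_integral_fourierChar_mul {g h : V → ℝ}
    (hfour : ∀ x, (h x : ℂ) = 𝓕 (fun t ↦ (g t : ℂ)) (-x)) (x : V) :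
    (h x : ℂ) = ∫ v, (𝐞 ⟪v, x⟫ : ℂ) * g v := by
  simp [hfour, Real.fourier_eq, Circle.smul_def]

/-- The easy half of Bochner's theorem, with the quadratic form made explicit. -/
theorem sum_sum_sub_eq_integral_normSq_mul {g h : V → ℝ} (hg : Integrable g)
    (hfour : ∀ x, (h x : ℂ) = 𝓕 (fun t ↦ (g t : ℂ)) (-x)) {α : Type*} (s : Finset α)
    (x : α → V) :
    ∑ a ∈ s, ∑ c ∈ s, h (x a - x c) =
      ∫ v, Complex.normSq (∑ a ∈ s, (𝐞 ⟪v, x a⟫ : ℂ)) * g v := by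
  have hint (y : V) : Integrable (fun v ↦ (𝐞 ⟪v, y⟫ : ℂ) * g v) :=
    (hg.ofReal (𝕜 := ℂ)).bdd_mul (c := 1) (by fun_prop) (ae_of_all _ fun v ↦ (Circle.norm_coe _).le)
  have hpt (v : V) : ∑ a ∈ s, ∑ c ∈ s, (𝐞 ⟪v, x a - x c⟫ : ℂ) * g v =
      (Complex.normSq (∑ a ∈ s, (𝐞 ⟪v, x a⟫ : ℂ)) : ℂ) * g v := by
    simp only [← Complex.mul_conj, map_sum, sum_mul_sum, ← sum_mul, ← Circle.coe_inv_eq_conj,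
      ← AddChar.map_neg_eq_inv, ← Circle.coe_mul, ← AddChar.map_add_eq_mul, sub_eq_add_neg,
      inner_add_right, inner_neg_right]
  have hswap : ∫ v, ∑ a ∈ s, ∑ c ∈ s, (𝐞 ⟪v, x a - x c⟫ : ℂ) * g v =
      ∑ a ∈ s, ∑ c ∈ s, ∫ v, (𝐞 ⟪v, x a - x c⟫ : ℂ) * g v := by
    rw [integral_finsetSum _ fun _ _ ↦ integrable_finsetSum _ fun _ _ ↦ hint _]
    exact sum_congr rfl fun _ _ ↦ integral_finsetSum _ fun _ _ ↦ hint _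
  apply Complex.ofReal_injective
  rw [integral_complex_ofReal.symm]
  push_cast
  simp_rw [← hpt, hswap, ofReal_eq_integral_fourierChar_mul hfour]

end PositiveDefinite

theorem sum_le_toReal_tsum_ofReal {β : Type*} {φ : β → ℝ} (hφ : ∀ z, 0 ≤ φ z)
    (hfin : ∑' z, ENNReal.ofReal (φ z) ≠ ⊤) (J : Finset β) :
    ∑ z ∈ J, φ z ≤ (∑' z, ENNReal.ofReal (φ z)).toReal := by
  rw [← ENNReal.toReal_ofReal (sum_nonneg fun z _ ↦ hφ z), ENNReal.ofReal_sum_of_nonneg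
    fun z _ ↦ hφ z]
  exact ENNReal.toReal_mono hfin (ENNReal.sum_le_tsum J)

theorem sum_sum_sub_le_card_mul {G α : Type*} [AddGroup G] {h φ : G → ℝ} (hφ : ∀ z, 0 ≤ φ z)
    (hhφ : ∀ z, z ≠ 0 → h z ≤ φ z) (hfin : ∑' z, ENNReal.ofReal (φ z) ≠ ⊤) {s : Finset α}
    {x : α → G} (hx : Set.InjOn x s) :
    ∑ a ∈ s, ∑ c ∈ s, h (x a - x c) ≤ #s * (h 0 + (∑' z, ENNReal.ofReal (φ z)).toReal) := by
  rw [← nsmul_eq_mul, ← sum_const]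
  refine sum_le_sum fun a ha ↦ ?_
  have hne : ∀ c ∈ s.erase a, x a - x c ≠ 0 := fun c hc hac ↦
    (ne_of_mem_erase hc) (hx (mem_of_mem_erase hc) ha (sub_eq_zero.mp hac).symm)
  have hinj : Set.InjOn (fun c ↦ x a - x c) (s.erase a) := fun c hc d hd hcd ↦
    hx (mem_of_mem_erase hc) (mem_of_mem_erase hd) (sub_right_injective hcd)
  calc ∑ c ∈ s, h (x a - x c) = h 0 + ∑ c ∈ s.erase a, h (x a - x c) := by
        rw [← add_sum_erase s _ ha, sub_self]
    _ ≤ h 0 + ∑ c ∈ s.erase a, φ (x a - x c) := by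
        gcongr with c hc
        exact hhφ _ (hne c hc)
    _ = h 0 + ∑ z ∈ (s.erase a).image (fun c ↦ x a - x c), φ z := by rw [sum_image hinj]
    _ ≤ h 0 + (∑' z, ENNReal.ofReal (φ z)).toReal := by
        gcongr
        exact sum_le_toReal_tsum_ofReal hφ hfin _

section ChangeOfVariables

variable {E : Type*} [NormedAddCommGroup E] [NormedSpace ℝ E] [FiniteDimensional ℝ E]
  [MeasurableSpace E] [BorelSpace E] (μ : Measure E) [μ.IsAddHaarMeasure]

theorem measurableEmbedding_linearMap {f : E →ₗ[ℝ] E} (hf : LinearMap.det f ≠ 0) :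
    MeasurableEmbedding f :=
  (f.toContinuousLinearMap.toContinuousLinearEquivOfDetNeZero hf).toHomeomorph.measurableEmbedding

theorem integral_comp_linearMap {F : Type*} [NormedAddCommGroup F] [NormedSpace ℝ F]
    {f : E →ₗ[ℝ] E} (hf : LinearMap.det f ≠ 0) (ψ : E → F) :
    ∫ x, ψ (f x) ∂μ = |(LinearMap.det f)⁻¹| • ∫ x, ψ x ∂μ := by
  rw [← (measurableEmbedding_linearMap hf).integral_map,
    Measure.map_linearMap_addHaar_eq_smul_addHaar μ hf, integral_smul_measure,
    ENNReal.toReal_ofReal (abs_nonneg _)]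

theorem MeasureTheory.Integrable.comp_linearMap {F : Type*} [NormedAddCommGroup F]
    {f : E →ₗ[ℝ] E} (hf : LinearMap.det f ≠ 0) {ψ : E → F} (hψ : Integrable ψ μ) :
    Integrable (fun x ↦ ψ (f x)) μ := by
  rw [← Function.comp_def, ← (measurableEmbedding_linearMap hf).integrable_map_iff,
    Measure.map_linearMap_addHaar_eq_smul_addHaar μ hf]
  exact hψ.smul_measure ENNReal.ofReal_ne_top

end ChangeOfVariables

section InnerCoords

variable {ι : Type*} [Fintype ι]

noncomputable def innerCoords (b : ι → EuclideanSpace ℝ ι) :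
    EuclideanSpace ℝ ι →ₗ[ℝ] EuclideanSpace ℝ ι where
  toFun v := WithLp.toLp 2 fun i ↦ ⟪b i, v⟫
  map_add' v w := by ext i; simp [inner_add_right]
  map_smul' c v := by ext i; simp [inner_smul_right]

@[simp]
theorem innerCoords_apply (b : ι → EuclideanSpace ℝ ι) (v : EuclideanSpace ℝ ι) (i : ι) :
    innerCoords b v i = ⟪b i, v⟫ := rfl

theorem det_innerCoords [DecidableEq ι] (b : ι → EuclideanSpace ℝ ι) :
    LinearMap.det (innerCoords b) = (EuclideanSpace.basisFun ι ℝ).toBasis.det b := by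
  rw [← LinearMap.det_toMatrix (EuclideanSpace.basisFun ι ℝ).toBasis, Module.Basis.det_apply,
    ← Matrix.det_transpose]
  congr 1
  ext i j
  simp [LinearMap.toMatrix_apply, Module.Basis.toMatrix_apply, EuclideanSpace.inner_single_right]

theorem ZLattice.covolume_eq_abs_det {V : Type*} [NormedAddCommGroup V] [InnerProductSpace ℝ V]
    [FiniteDimensional ℝ V] [MeasurableSpace V] [BorelSpace V] (Λ : Submodule ℤ V)
    [DiscreteTopology Λ] [IsZLattice ℝ Λ] [DecidableEq ι] (b : Module.Basis ι ℤ Λ)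
    (b₀ : OrthonormalBasis ι ℝ V) :
    ZLattice.covolume Λ = |b₀.toBasis.det ((↑) ∘ b)| := by
  rw [ZLattice.covolume_eq_det_mul_measureReal Λ volume b b₀.toBasis,
    measureReal_congr (ZSpan.fundamentalDomain_ae_parallelepiped _ volume),
    OrthonormalBasis.coe_toBasis, measureReal_def, b₀.volume_parallelepiped, ENNReal.toReal_one,
    mul_one]

theorem abs_det_innerCoords (Λ : Submodule ℤ (EuclideanSpace ℝ ι)) [DiscreteTopology Λ]
    [IsZLattice ℝ Λ] (b : Module.Basis ι ℤ Λ) :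
    |LinearMap.det (innerCoords ((↑) ∘ b))| = ZLattice.covolume Λ := by
  rw [det_innerCoords, ZLattice.covolume_eq_abs_det Λ b (EuclideanSpace.basisFun ι ℝ)]

theorem det_innerCoords_ne_zero (Λ : Submodule ℤ (EuclideanSpace ℝ ι)) [DiscreteTopology Λ]
    [IsZLattice ℝ Λ] (b : Module.Basis ι ℤ Λ) : LinearMap.det (innerCoords ((↑) ∘ b)) ≠ 0 :=
  abs_pos.mp (abs_det_innerCoords Λ b ▸ ZLattice.covolume_pos Λ volume)

theorem exists_forall_abs_inner_le_imp {b : ι → EuclideanSpace ℝ ι}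
    (hb : LinearMap.det (innerCoords b) ≠ 0) {P : EuclideanSpace ℝ ι → Prop}
    (hP : ∀ᶠ v in 𝓝 0, P v) : ∃ r > 0, ∀ v, (∀ i, |⟪b i, v⟫| ≤ r) → P v := by
  set e := (innerCoords b).toContinuousLinearMap.toContinuousLinearEquivOfDetNeZero hb
  have hcont : Continuous fun θ : ι → ℝ ↦ e.symm ((EuclideanSpace.equiv ι ℝ).symm θ) := by
    fun_prop
  have hθ : ∀ᶠ θ in 𝓝 (0 : ι → ℝ), P (e.symm ((EuclideanSpace.equiv ι ℝ).symm θ)) :=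
    (hcont.tendsto 0).eventually (by simpa using hP)
  obtain ⟨r, hr, hball⟩ := Metric.nhds_basis_closedBall.eventually_iff.mp hθ
  refine ⟨r, hr, fun v hv ↦ ?_⟩
  have hv' : (fun i ↦ ⟪b i, v⟫) ∈ Metric.closedBall (0 : ι → ℝ) r := by
    rw [mem_closedBall_zero_iff, pi_norm_le_iff_of_nonneg hr.le]
    simpa using hv
  convert hball hv' using 1
  exact (e.symm_apply_apply v).symm

end InnerCoords

def grid (ι : Type*) [Fintype ι] [DecidableEq ι] (N : ℕ) : Finset (ι → ℕ) :=
  Fintype.piFinset fun _ ↦ range N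

section Grid

variable {ι : Type*} [Fintype ι]

theorem card_grid [DecidableEq ι] (N : ℕ) : #(grid ι N) = N ^ Fintype.card ι := by
  simp [grid]

noncomputable def gridPoint {V : Type*} [AddCommGroup V] [Module ℝ V] (b : ι → V)
    (a : ι → ℕ) : V :=
  ∑ i, (a i : ℝ) • b i

theorem sum_fourierChar_inner_gridPoint [DecidableEq ι] {V : Type*} [NormedAddCommGroup V]
    [InnerProductSpace ℝ V] (b : ι → V) (N : ℕ) (v : V) :
    ∑ a ∈ grid ι N, (𝐞 ⟪v, gridPoint b a⟫ : ℂ) = ∏ i, expSum N ⟪b i, v⟫ := by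
  simp only [grid, gridPoint, expSum, prod_univ_sum, inner_sum, real_inner_smul_right,
    real_inner_comm v, fourierChar_sum]

theorem normSq_sum_fourierChar_inner_gridPoint [DecidableEq ι] {V : Type*} [NormedAddCommGroup V]
    [InnerProductSpace ℝ V] (b : ι → V) (N : ℕ) (v : V) :
    Complex.normSq (∑ a ∈ grid ι N, (𝐞 ⟪v, gridPoint b a⟫ : ℂ)) = ∏ i, fejerKernel N ⟪b i, v⟫ := by
  rw [sum_fourierChar_inner_gridPoint, map_prod]
  rfl

theorem sum_sum_gridPoint_sub_le [DecidableEq ι] {E : Type*} [AddCommGroup E] [Module ℝ E]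
    {Λ : Submodule ℤ E} (b : Module.Basis ι ℤ Λ) {h : E → ℝ} {φ : Λ → ℝ} (hφ : ∀ z, 0 ≤ φ z)
    (hhφ : ∀ z : Λ, z ≠ 0 → h z ≤ φ z) (hfin : ∑' z, ENNReal.ofReal (φ z) ≠ ⊤) (N : ℕ) :
    ∑ a ∈ grid ι N, ∑ a' ∈ grid ι N, h (gridPoint ((↑) ∘ b) a - gridPoint ((↑) ∘ b) a') ≤
      N ^ Fintype.card ι * (h 0 + (∑' z, ENNReal.ofReal (φ z)).toReal) := by
  set x : (ι → ℕ) → Λ := fun a ↦ b.equivFun.symm fun i ↦ a i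
  have hx (a : ι → ℕ) : (x a : E) = gridPoint ((↑) ∘ b) a := by
    simp [x, gridPoint, Module.Basis.equivFun_symm_apply, Nat.cast_smul_eq_nsmul]
  have hinj : Function.Injective x :=
    b.equivFun.symm.injective.comp fun a a' haa' ↦ funext fun i ↦ by exact_mod_cast congrFun haa' i
  rw [← Nat.cast_pow, ← card_grid]
  simp only [← hx, ← Submodule.coe_sub]
  exact sum_sum_sub_le_card_mul (h := fun z : Λ ↦ h z) hφ hhφ hfin hinj.injOn

theorem integral_prod_euclideanSpace (f : ℝ → ℝ) :
    ∫ θ : EuclideanSpace ℝ ι, ∏ i, f (θ i) = (∫ x, f x) ^ Fintype.card ι :=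
  ((EuclideanSpace.volume_preserving_symm_measurableEquiv_toLp ι).integral_comp'
    (fun θ : ι → ℝ ↦ ∏ i, f (θ i))).trans (integral_fintype_prod_volume_eq_pow f)

theorem MeasureTheory.Integrable.prod_euclideanSpace {f : ℝ → ℝ} (hf : Integrable f) :
    Integrable fun θ : EuclideanSpace ℝ ι ↦ ∏ i, f (θ i) :=
  (EuclideanSpace.volume_preserving_symm_measurableEquiv_toLp ι).integrable_comp_emb
    (MeasurableEquiv.measurableEmbedding _) |>.mpr (Integrable.fintype_prod fun _ ↦ hf)

/-- Truncate each kernel to `[-r, r]`, where `g ≥ c`, and change variables to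
`θ = innerCoords b v`. -/
theorem integral_prod_fejerKernel_mul_ge {b : ι → EuclideanSpace ℝ ι}
    (hb : LinearMap.det (innerCoords b) ≠ 0) {g : EuclideanSpace ℝ ι → ℝ} (hg : Integrable g)
    (hg0 : ∀ v, 0 ≤ g v) {c r : ℝ} (hc : 0 ≤ c) (hr : 0 < r) (hr' : r ≤ 1 / 2)
    (hbox : ∀ v, (∀ i, |⟪b i, v⟫| ≤ r) → c ≤ g v) {N : ℕ} (hN : 1 / (2 * r ^ 2) ≤ N) :
    |(LinearMap.det (innerCoords b))⁻¹| * c * (N - 1 / (2 * r ^ 2)) ^ Fintype.card ι ≤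
      ∫ v, (∏ i, fejerKernel N ⟪b i, v⟫) * g v := by
  set K := (Set.Icc (-r) r).indicator (fejerKernel N)
  have hK : Integrable K :=
    (continuous_fejerKernel N).integrableOn_Icc.integrable_indicator measurableSet_Icc
  have hKint : N - 1 / (2 * r ^ 2) ≤ ∫ θ, K θ := by
    rw [integral_indicator measurableSet_Icc]
    exact integral_Icc_fejerKernel_ge hr hr'
  have hpt (v : EuclideanSpace ℝ ι) :
      c * ∏ i, K (innerCoords b v i) ≤ (∏ i, fejerKernel N ⟪b i, v⟫) * g v := by
    by_cases hv : ∀ i, |⟪b i, v⟫| ≤ r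
    · have hKv : ∏ i, K (innerCoords b v i) = ∏ i, fejerKernel N ⟪b i, v⟫ :=
        prod_congr rfl fun i _ ↦ Set.indicator_of_mem (Set.mem_Icc.mpr (abs_le.mp (hv i))) _
      rw [hKv, mul_comm]
      exact mul_le_mul_of_nonneg_left (hbox v hv) (prod_nonneg fun i _ ↦ fejerKernel_nonneg _ _)
    · push Not at hv
      obtain ⟨i, hi⟩ := hv
      have hKi : K (innerCoords b v i) = 0 :=
        Set.indicator_of_notMem (fun h ↦ hi.not_ge (abs_le.mpr (Set.mem_Icc.mp h))) _
      rw [prod_eq_zero (mem_univ i) hKi, mul_zero]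
      exact mul_nonneg (prod_nonneg fun i _ ↦ fejerKernel_nonneg _ _) (hg0 v)
  have hrhs : Integrable fun v ↦ (∏ i, fejerKernel N ⟪b i, v⟫) * g v :=
    hg.bdd_mul (c := ((N : ℝ) ^ 2) ^ Fintype.card ι) (by fun_prop) (ae_of_all _ fun v ↦ by
      rw [Real.norm_eq_abs, abs_of_nonneg (prod_nonneg fun i _ ↦ fejerKernel_nonneg _ _),
        ← card_univ, ← prod_const]
      exact prod_le_prod (fun i _ ↦ fejerKernel_nonneg _ _) fun i _ ↦ fejerKernel_le_sq N _)
  calc |(LinearMap.det (innerCoords b))⁻¹| * c * (N - 1 / (2 * r ^ 2)) ^ Fintype.card ι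
      ≤ |(LinearMap.det (innerCoords b))⁻¹| * c * (∫ θ, K θ) ^ Fintype.card ι := by gcongr
    _ = ∫ v, c * ∏ i, K (innerCoords b v i) := by
        rw [integral_const_mul, integral_comp_linearMap volume hb (fun θ ↦ ∏ i, K (θ i)),
          integral_prod_euclideanSpace, smul_eq_mul]
        ring
    _ ≤ ∫ v, (∏ i, fejerKernel N ⟪b i, v⟫) * g v :=
        integral_mono (((hK.prod_euclideanSpace).comp_linearMap volume hb).const_mul c) hrhs hpt

end Grid

theorem le_of_forall_mul_sub_pow_le {a B C : ℝ} {n : ℕ}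
    (h : ∀ N : ℕ, C ≤ N → a * (N - C) ^ n ≤ N ^ n * B) : a ≤ B := by
  have hlim : Tendsto (fun N : ℕ ↦ a * (1 - C / N) ^ n) atTop (𝓝 (a * (1 - 0) ^ n)) :=
    tendsto_const_nhds.mul
      ((tendsto_const_nhds.sub (tendsto_const_div_atTop_nhds_zero_nat C)).pow n)
  refine le_of_tendsto (by simpa using hlim) ?_
  filter_upwards [eventually_ge_atTop ⌈max C 1⌉₊] with N hN
  have hN' : max C 1 ≤ N := Nat.ceil_le.mp hN
  have hN0 : (0 : ℝ) < N := by linarith [le_max_right C 1]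
  rw [one_sub_div hN0.ne', div_pow, mul_div_assoc', div_le_iff₀ (by positivity), mul_comm B]
  exact h N (le_of_max_le_left hN')

section LinearProgrammingBound

variable {ι : Type*} [Fintype ι] [DecidableEq ι] (Λ : Submodule ℤ (EuclideanSpace ℝ ι))
  [DiscreteTopology Λ] [IsZLattice ℝ Λ] {g h : EuclideanSpace ℝ ι → ℝ} {φ : Λ → ℝ}

theorem inv_covolume_mul_le_add_tsum_of_le_on_box (b : Module.Basis ι ℤ Λ) (hg : Integrable g)
    (hg0 : ∀ v, 0 ≤ g v) (hfour : ∀ x, (h x : ℂ) = 𝓕 (fun t ↦ (g t : ℂ)) (-x)) (hφ : ∀ z, 0 ≤ φ z)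
    (hhφ : ∀ z : Λ, z ≠ 0 → h z ≤ φ z) (hfin : ∑' z, ENNReal.ofReal (φ z) ≠ ⊤) {c r : ℝ}
    (hc : 0 ≤ c) (hr : 0 < r) (hr' : r ≤ 1 / 2)
    (hbox : ∀ v, (∀ i, |⟪(b i : EuclideanSpace ℝ ι), v⟫| ≤ r) → c ≤ g v) :
    (ZLattice.covolume Λ)⁻¹ * c ≤ h 0 + (∑' z, ENNReal.ofReal (φ z)).toReal := by
  refine le_of_forall_mul_sub_pow_le (C := 1 / (2 * r ^ 2)) (n := Fintype.card ι) fun N hN ↦ ?_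
  calc (ZLattice.covolume Λ)⁻¹ * c * (N - 1 / (2 * r ^ 2)) ^ Fintype.card ι
      ≤ ∫ v, (∏ i, fejerKernel N ⟪(b i : EuclideanSpace ℝ ι), v⟫) * g v := by
        rw [← abs_det_innerCoords Λ b, ← abs_inv]
        exact integral_prod_fejerKernel_mul_ge (det_innerCoords_ne_zero Λ b) hg hg0 hc hr hr' hbox
          hN
    _ = ∑ a ∈ grid ι N, ∑ a' ∈ grid ι N,
          h (gridPoint ((↑) ∘ b) a - gridPoint ((↑) ∘ b) a') := by
        simp only [sum_sum_sub_eq_integral_normSq_mul hg hfour,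
          normSq_sum_fourierChar_inner_gridPoint, Function.comp_apply]
    _ ≤ N ^ Fintype.card ι * (h 0 + (∑' z, ENNReal.ofReal (φ z)).toReal) :=
        sum_sum_gridPoint_sub_le b hφ hhφ hfin N

theorem inv_covolume_mul_le_add_tsum (hg_cont : Continuous g) (hg : Integrable g)
    (hg0 : ∀ v, 0 ≤ g v) (hfour : ∀ x, (h x : ℂ) = 𝓕 (fun t ↦ (g t : ℂ)) (-x))
    (hφ : ∀ z, 0 ≤ φ z) (hhφ : ∀ z : Λ, z ≠ 0 → h z ≤ φ z)
    (hfin : ∑' z, ENNReal.ofReal (φ z) ≠ ⊤) :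
    (ZLattice.covolume Λ)⁻¹ * g 0 ≤ h 0 + (∑' z, ENNReal.ofReal (φ z)).toReal := by
  have hcard : Fintype.card (Module.Free.ChooseBasisIndex ℤ Λ) = Fintype.card ι := by
    rw [← Module.finrank_eq_card_chooseBasisIndex, ZLattice.rank ℝ Λ, finrank_euclideanSpace]
  set b := (Module.Free.chooseBasis ℤ Λ).reindex (Fintype.equivOfCardEq hcard)
  have hcov : 0 < (ZLattice.covolume Λ)⁻¹ := inv_pos.mpr (ZLattice.covolume_pos Λ volume)
  rw [← le_div_iff₀' hcov]
  refine le_of_forall_lt_imp_le_of_dense fun c hc ↦ (le_div_iff₀' hcov).mpr ?_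
  obtain ⟨r, hr, hbox⟩ := exists_forall_abs_inner_le_imp (det_innerCoords_ne_zero Λ b)
    ((hg_cont.tendsto 0).eventually_const_lt hc)
  refine (mul_le_mul_of_nonneg_left (le_max_left c 0) hcov.le).trans
    (inv_covolume_mul_le_add_tsum_of_le_on_box Λ b hg hg0 hfour hφ hhφ hfin (le_max_right c 0)
      (lt_min hr one_half_pos) (min_le_right r _) fun v hv ↦ max_le ?_ (hg0 v))
  exact (hbox v fun i ↦ (hv i).trans (min_le_left r _)).le

end LinearProgrammingBound

/-- Euclidean linear programming bound, lattice case: if `h(x) ≤ f(|x|²)` for `x ≠ 0` and `h`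
is the Fourier transform of a nonnegative continuous `g ∈ L¹(ℝⁿ)`, then for any full-rank
lattice `Λ ⊆ ℝⁿ` of covolume `1/δ`, `∑_{x ∈ Λ, x ≠ 0} f(|x|²) ≥ δ · liminf_{t→0} g(t) − h(0)`. -/
theorem stmt_18 (n : ℕ) (f : ℝ → ℝ) (hf : ∀ x : ℝ, 0 < x → 0 ≤ f x)
    (g h : EuclideanSpace ℝ (Fin n) → ℝ)
    (hg_cont : Continuous g) (hg_int : Integrable g) (hg_nonneg : ∀ t, 0 ≤ g t)
    (hfour : ∀ x, (h x : ℂ) = 𝓕 (fun t => (g t : ℂ)) (-x))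
    (hbound : ∀ x : EuclideanSpace ℝ (Fin n), x ≠ 0 → h x ≤ f (‖x‖ ^ 2))
    (Λ : Submodule ℤ (EuclideanSpace ℝ (Fin n))) [DiscreteTopology Λ] [IsZLattice ℝ Λ]
    (δ : ℝ) (hδ : ZLattice.covolume Λ = 1 / δ) :
    ENNReal.ofReal (δ * liminf g (nhds 0) - h 0) ≤
      ∑' x : Λ, ENNReal.ofReal
        (if (x : EuclideanSpace ℝ (Fin n)) ≠ 0
          then f (‖(x : EuclideanSpace ℝ (Fin n))‖ ^ 2) else 0) := by
  set φ : Λ → ℝ := fun z ↦ if (z : EuclideanSpace ℝ (Fin n)) ≠ 0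
    then f (‖(z : EuclideanSpace ℝ (Fin n))‖ ^ 2) else 0
  change _ ≤ ∑' z, ENNReal.ofReal (φ z)
  by_cases hfin : ∑' z, ENNReal.ofReal (φ z) = ⊤
  · exact hfin ▸ le_top
  have hφ (z : Λ) : 0 ≤ φ z := by
    simp only [φ]
    split_ifs with hz
    exacts [hf _ (pow_pos (norm_pos_iff.mpr hz) 2), le_rfl]
  have hhφ (z : Λ) (hz : z ≠ 0) : h z ≤ φ z := by
    have hz' : (z : EuclideanSpace ℝ (Fin n)) ≠ 0 := by simpa using hz
    simpa only [φ, if_pos hz'] using hbound z hz'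
  have hδ' : δ = (ZLattice.covolume Λ)⁻¹ := by rw [hδ, one_div, inv_inv]
  rw [(hg_cont.tendsto 0).liminf_eq, hδ']
  exact ENNReal.ofReal_le_of_le_toReal (sub_le_iff_le_add'.mpr
    (inv_covolume_mul_le_add_tsum Λ hg_cont hg_int hg_nonneg hfour hφ hhφ hfin))
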